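/- arXiv:1103.6132 — 3 statements merged into one kernel-verified Lean document; each statement's English description precedes it below -/
import Mathlib

section
/- Let A be a ring, A₀ a subring, π : A → A₀ a ring homomorphism with π|_{A₀} = id, A₊ = ker π. Suppose every finitely generated right A-module M with M·A₊ = M is zero. Let P be a finitely generated projective right A-module and let T(P) = P ⊗_A A₀ ≅ P/(P·A₊). Let g : T(P) → P be an A₀-linear section of the canonical projection f : P → T(P). Then the A-linear map ψ : T(P) ⊗_{A₀} A → P, x ⊗ a ↦ g(x)·a, is an isomorphism. -/
/-!
Surjectivity of `ψ` is Nakayama's lemma: its image contains `g(T(P))`, which generates `P`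
modulo `P·A₊`. As `P` is projective, `ψ` splits, so `K = ker ψ` is a direct summand of `E`;
it is finitely generated because `E` is generated by the image of the finite `A₀`-module
`T(P)`. Every element of `E` is `ι t` modulo `E·A₊`; for an element of `K`, applying `ψ` and
reducing modulo `P·A₊` gives `t = 0`, so `K ⊆ E·A₊`. Projecting onto the summand `K` yields
`K = K·A₊`, hence `K = 0` by Nakayama again.
-/

universe u

/-- Universal property of `Q ⊗_{A₀} A` (for left modules, `A ⊗_{A₀} Q`). -/
def IsBaseChangeAlong (A : Type u) [Ring A] (A₀ : Subring A)
    (Q : Type u) [AddCommGroup Q] [Module A₀ Q]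
    (E : Type u) [AddCommGroup E] [Module A E] (ι : Q →ₗ[A₀] E) : Prop :=
  ∀ (N : Type u) [AddCommGroup N] [Module A N] (f : Q →ₗ[A₀] N),
    ∃! F : E →ₗ[A] N, ∀ q : Q, F (ι q) = f q

/-- The submodule `N·A₊` (for left modules: `A₊·N`), where `A₊ = ker π`. -/
def kerSMulSubmodule {A : Type u} [Ring A] {A₀ : Subring A} (π : A →+* A₀)
    (N : Type u) [AddCommGroup N] [Module A N] : Submodule A N :=
  Submodule.span A {x : N | ∃ a ∈ RingHom.ker π, ∃ m : N, x = a • m}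

def HasNakayamaProperty {A : Type u} [Ring A] {A₀ : Subring A} (π : A →+* A₀) : Prop :=
  ∀ (M : Type u) [AddCommGroup M] [Module A M], Module.Finite A M →
    kerSMulSubmodule π M = ⊤ → Subsingleton M

section
variable {A : Type u} [Ring A] {A₀ : Subring A} {π : A →+* A₀}
  {M N : Type u} [AddCommGroup M] [Module A M] [AddCommGroup N] [Module A N]

lemma smul_mem_kerSMulSubmodule {a : A} (ha : a ∈ RingHom.ker π) (m : N) :
    a • m ∈ kerSMulSubmodule π N :=
  Submodule.subset_span ⟨a, ha, m, rfl⟩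

lemma map_kerSMulSubmodule_le (f : M →ₗ[A] N) :
    (kerSMulSubmodule π M).map f ≤ kerSMulSubmodule π N := by
  rw [kerSMulSubmodule, Submodule.map_span, Submodule.span_le]
  rintro _ ⟨_, ⟨a, ha, m, rfl⟩, rfl⟩
  rw [map_smul]
  exact smul_mem_kerSMulSubmodule ha (f m)

lemma sub_retraction_mem_ker (hπ : ∀ x : A₀, π (x : A) = x) (a : A) :
    a - π a ∈ RingHom.ker π := by
  simp [RingHom.mem_ker, hπ]

lemma smul_quotient_kerSMulSubmodule_eq (hπ : ∀ x : A₀, π (x : A) = x) (a : A)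
    (x : N ⧸ kerSMulSubmodule π N) : a • x = (π a : A) • x := by
  obtain ⟨n, rfl⟩ := Submodule.Quotient.mk_surjective _ x
  rw [← sub_eq_zero, ← sub_smul, ← Submodule.Quotient.mk_smul, Submodule.Quotient.mk_eq_zero]
  exact smul_mem_kerSMulSubmodule (sub_retraction_mem_ker hπ a) n

/-- `A` acts on `N / N·A₊` through `π`. -/
lemma finite_quotient_kerSMulSubmodule (hπ : ∀ x : A₀, π (x : A) = x) [Module.Finite A N] :
    Module.Finite A₀ (N ⧸ kerSMulSubmodule π N) := by
  obtain ⟨S, hS⟩ := Module.Finite.fg_top (R := A) (M := N ⧸ kerSMulSubmodule π N)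
  refine ⟨⟨S, Submodule.eq_top_iff'.mpr fun x => ?_⟩⟩
  have hx : x ∈ Submodule.span A (S : Set _) := hS ▸ Submodule.mem_top
  induction hx using Submodule.span_induction with
  | mem y hy => exact Submodule.subset_span hy
  | zero => exact zero_mem _
  | add y z _ _ hy hz => exact add_mem hy hz
  | smul a y _ hy =>
    rw [smul_quotient_kerSMulSubmodule_eq hπ]
    exact Submodule.smul_mem _ (π a) hy

lemma eq_top_of_sup_kerSMulSubmodule_eq_top (hNak : HasNakayamaProperty π) [Module.Finite A M]
    {L : Submodule A M} (h : L ⊔ kerSMulSubmodule π M = ⊤) : L = ⊤ := by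
  have htop : kerSMulSubmodule π (M ⧸ L) = ⊤ :=
    top_le_iff.mp <| (Submodule.map_mkQ_eq_top L _).mpr h ▸ map_kerSMulSubmodule_le L.mkQ
  exact Submodule.Quotient.subsingleton_iff.mp (hNak _ inferInstance htop)

lemma sup_kerSMulSubmodule_eq_top_of_section {L : Submodule A N}
    (g : N ⧸ kerSMulSubmodule π N → N) (hg : ∀ x, Submodule.Quotient.mk (g x) = x)
    (hgL : ∀ x, g x ∈ L) : L ⊔ kerSMulSubmodule π N = ⊤ := by
  refine eq_top_iff.mpr fun n _ => Submodule.mem_sup.mpr ⟨_, hgL (Submodule.Quotient.mk n),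
    n - g (Submodule.Quotient.mk n), ?_, add_sub_cancel _ _⟩
  rw [← Submodule.Quotient.mk_eq_zero, Submodule.Quotient.mk_sub, hg, sub_self]

lemma kerSMulSubmodule_eq_top_of_retraction {K : Submodule A M}
    (hK : K ≤ kerSMulSubmodule π M) (r : M →ₗ[A] K) (hr : ∀ k : K, r k = k) :
    kerSMulSubmodule π K = ⊤ :=
  eq_top_iff.mpr fun k _ => hr k ▸ map_kerSMulSubmodule_le r ⟨k, hK k.2, rfl⟩

lemma exists_retraction_ker_of_surjective [Module.Projective A N] (ψ : M →ₗ[A] N)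
    (hψ : Function.Surjective ψ) :
    ∃ r : M →ₗ[A] LinearMap.ker ψ, ∀ k : LinearMap.ker ψ, r k = k := by
  obtain ⟨s, hs⟩ := Module.projective_lifting_property ψ LinearMap.id hψ
  have hψs : ∀ m, ψ (m - s (ψ m)) = 0 := fun m => by
    rw [map_sub, ← LinearMap.comp_apply ψ s, hs, LinearMap.id_apply, sub_self]
  refine ⟨(LinearMap.id - s ∘ₗ ψ).codRestrict _ hψs, fun k => Subtype.ext ?_⟩
  change (k : M) - s (ψ k) = k
  rw [LinearMap.mem_ker.mp k.2, map_zero, sub_zero]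

end

section
variable {A : Type u} [Ring A] {A₀ : Subring A} {π : A →+* A₀}
  {Q : Type u} [AddCommGroup Q] [Module A₀ Q] {E : Type u} [AddCommGroup E] [Module A E]
  {ι : Q →ₗ[A₀] E}

lemma IsBaseChangeAlong.span_range_eq_top (hE : IsBaseChangeAlong A A₀ Q E ι) :
    Submodule.span A (Set.range ι) = ⊤ := by
  set L := Submodule.span A (Set.range ι)
  obtain ⟨F, -, hF⟩ := hE (E ⧸ L) 0
  have hmkQ : L.mkQ = 0 := (hF _ fun q => (Submodule.Quotient.mk_eq_zero L).mpr
    (Submodule.subset_span ⟨q, rfl⟩)).trans (hF 0 fun _ => rfl).symm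
  exact Submodule.eq_top_iff'.mpr fun e =>
    (Submodule.Quotient.mk_eq_zero L).mp (LinearMap.congr_fun hmkQ e)

lemma exists_sub_mem_kerSMulSubmodule (hπ : ∀ x : A₀, π (x : A) = x)
    (hι : Submodule.span A (Set.range ι) = ⊤) (e : E) :
    ∃ q, e - ι q ∈ kerSMulSubmodule π E := by
  induction (hι ▸ Submodule.mem_top : e ∈ Submodule.span A (Set.range ι))
    using Submodule.span_induction with
  | mem x hx =>
    obtain ⟨q, rfl⟩ := hx
    exact ⟨q, by simp⟩
  | zero => exact ⟨0, by simp⟩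
  | add x y _ _ hx hy =>
    obtain ⟨q, hq⟩ := hx
    obtain ⟨q', hq'⟩ := hy
    refine ⟨q + q', ?_⟩
    convert add_mem hq hq' using 1
    rw [map_add]; abel
  | smul a x _ hx =>
    obtain ⟨q, hq⟩ := hx
    refine ⟨π a • q, ?_⟩
    have : a • x - ι (π a • q) = a • (x - ι q) + (a - π a) • ι q := by
      rw [map_smul, Subring.smul_def, smul_sub, sub_smul]; abel
    rw [this]
    exact add_mem (Submodule.smul_mem _ a hq)
      (smul_mem_kerSMulSubmodule (sub_retraction_mem_ker hπ a) (ι q))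

lemma finite_of_span_range_eq_top [Module.Finite A₀ Q]
    (hι : Submodule.span A (Set.range ι) = ⊤) : Module.Finite A E := by
  obtain ⟨S, hS⟩ := Module.Finite.fg_top (R := A₀) (M := Q)
  refine ⟨⟨(S.finite_toSet.image ι).toFinset, ?_⟩⟩
  rw [Set.Finite.coe_toFinset, ← Submodule.span_span_of_tower A₀, ← Submodule.map_span, hS,
    Submodule.map_top, LinearMap.coe_range, hι]

lemma ker_le_kerSMulSubmodule (hπ : ∀ x : A₀, π (x : A) = x)
    {P : Type u} [AddCommGroup P] [Module A P] {g : P ⧸ kerSMulSubmodule π P → P}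
    (hg : ∀ x, Submodule.Quotient.mk (g x) = x) {ι : P ⧸ kerSMulSubmodule π P →ₗ[A₀] E}
    (hι : Submodule.span A (Set.range ι) = ⊤) {ψ : E →ₗ[A] P} (hψ : ∀ x, ψ (ι x) = g x) :
    LinearMap.ker ψ ≤ kerSMulSubmodule π E := by
  intro e he
  obtain ⟨t, ht⟩ := exists_sub_mem_kerSMulSubmodule hπ hι e
  have hgt : g t ∈ kerSMulSubmodule π P := by
    have hψt : ψ (ι t - e) = g t := by rw [map_sub, hψ, LinearMap.mem_ker.mp he, sub_zero]
    exact hψt ▸ map_kerSMulSubmodule_le ψ ⟨_, neg_sub e (ι t) ▸ neg_mem ht, rfl⟩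
  have ht0 : t = 0 := by rw [← hg t, Submodule.Quotient.mk_eq_zero]; exact hgt
  simpa [ht0] using ht

end

/-- Let `A₀ ⊆ A` with retraction `π : A → A₀`, `A₊ = ker π`, and suppose every finitely
generated `A`-module `M` with `M·A₊ = M` is zero. Let `P` be a finitely generated
projective `A`-module, `T(P) = P/P·A₊`, and `g` an `A₀`-linear section of the canonical
projection `P → T(P)`. Then the `A`-linear map `ψ : T(P) ⊗_{A₀} A → P`, `x ⊗ a ↦ g(x)·a`,
is an isomorphism. -/
theorem psi_iso (A : Type u) [Ring A] (A₀ : Subring A) (π : A →+* A₀)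
    (hπ : ∀ x : A₀, π (x : A) = x)
    (hNak : ∀ (M : Type u) [AddCommGroup M] [Module A M], Module.Finite A M →
      kerSMulSubmodule π M = ⊤ → Subsingleton M)
    (P : Type u) [AddCommGroup P] [Module A P]
    [Module.Finite A P] [Module.Projective A P]
    (g : (P ⧸ kerSMulSubmodule π P) →ₗ[A₀] P)
    (hg : ∀ x : P ⧸ kerSMulSubmodule π P, Submodule.Quotient.mk (g x) = x)
    (E : Type u) [AddCommGroup E] [Module A E]
    (ι : (P ⧸ kerSMulSubmodule π P) →ₗ[A₀] E)
    (hE : IsBaseChangeAlong A A₀ (P ⧸ kerSMulSubmodule π P) E ι)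
    (ψ : E →ₗ[A] P) (hψ : ∀ x, ψ (ι x) = g x) :
    Function.Bijective ψ := by
  have hι := hE.span_range_eq_top
  have hsurj : Function.Surjective ψ := LinearMap.range_eq_top.mp <|
    eq_top_of_sup_kerSMulSubmodule_eq_top hNak <|
      sup_kerSMulSubmodule_eq_top_of_section g hg fun x => ⟨ι x, hψ x⟩
  obtain ⟨r, hr⟩ := exists_retraction_ker_of_surjective ψ hsurj
  have : Module.Finite A₀ (P ⧸ kerSMulSubmodule π P) := finite_quotient_kerSMulSubmodule hπ
  have : Module.Finite A E := finite_of_span_range_eq_top hι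
  have : Module.Finite A (LinearMap.ker ψ) := .of_surjective r fun k => ⟨k, hr k⟩
  have : Subsingleton (LinearMap.ker ψ) := hNak _ this <|
    kerSMulSubmodule_eq_top_of_retraction (ker_le_kerSMulSubmodule hπ hg hι hψ) r hr
  exact ⟨LinearMap.ker_eq_bot.mp Submodule.eq_bot_of_subsingleton, hsurj⟩
end

section
/- Let A be an ℕ-graded ring with A₀ its degree-zero subring, and let P be a finitely generated ℤ-graded projective right A-module. Then P is isomorphic, as a graded A-module, to (P/P·A₊) ⊗_{A₀} A, where A₊ = ⊕_{n>0} A_n and P/P·A₊ is regarded as a graded A₀-module. In particular every finitely generated graded projective module over an ℕ-graded ring is extended from its degree-zero subring. -/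
/-!
Because `A` lives in degrees `≥ 0`, `a ↦ a₀` is a ring homomorphism. Applying it to the
coefficients of a splitting of `A^(P) → P`, and then taking homogeneous components, gives a graded
`A₀`-linear section `s` of `P → P/A₊P`; the universal property turns `s` into a graded `A`-linear
map `F : E → P` with `F ∘ ι = s`, which is an isomorphism modulo `A₊`. As `P` is finitely
generated, its degrees are bounded below, so `F` is onto by the graded Nakayama lemma. It then
splits because `P` is projective, so `ker F` is a direct summand of `E`; together with
`ker F ⊆ A₊E` this gives `ker F ⊆ A₊ ker F`, and Nakayama again gives `ker F = 0`.
-/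

universe u

/-- The submodule `P·A₊` (for left modules: `A₊·P`), `A₊ = ⊕_{n>0} A_n`. -/
def posSMulSubmodule {A : Type u} [Ring A] (𝒜 : ℤ → AddSubgroup A)
    (P : Type u) [AddCommGroup P] [Module A P] : Submodule A P :=
  Submodule.span A {x : P | ∃ n : ℤ, 0 < n ∧ ∃ a ∈ 𝒜 n, ∃ p : P, x = a • p}

open DirectSum

namespace GradedProjective

section Decomposition

variable {M : Type*} [AddCommGroup M] (ℳ : ℤ → AddSubgroup M) [Decomposition ℳ]
variable {M' : Type*} [AddCommGroup M'] (ℳ' : ℤ → AddSubgroup M') [Decomposition ℳ']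

noncomputable def projTo (n : ℤ) : M →+ ℳ n :=
  (DFinsupp.evalAddMonoidHom n).comp (decomposeAddEquiv ℳ).toAddMonoidHom

noncomputable def proj (n : ℤ) : M →+ M :=
  (ℳ n).subtype.comp (projTo ℳ n)

lemma proj_apply (n : ℤ) (x : M) : proj ℳ n x = decompose ℳ x n := rfl

lemma proj_mem (n : ℤ) (x : M) : proj ℳ n x ∈ ℳ n := (decompose ℳ x n).2

lemma proj_of_mem_same {n : ℤ} {x : M} (hx : x ∈ ℳ n) : proj ℳ n x = x :=
  decompose_of_mem_same ℳ hx

lemma proj_of_mem_ne {m n : ℤ} {x : M} (hx : x ∈ ℳ m) (hmn : m ≠ n) : proj ℳ n x = 0 :=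
  decompose_of_mem_ne ℳ hx hmn

lemma sum_proj [∀ (i : ℤ) (x : ℳ i), Decidable (x ≠ 0)] (x : M) :
    ∑ n ∈ (decompose ℳ x).support, proj ℳ n x = x :=
  sum_support_decompose ℳ x

lemma map_proj_of_map_mem (f : M →+ M') (hf : ∀ n, ∀ x ∈ ℳ n, f x ∈ ℳ' n) (n : ℤ) (x : M) :
    f (proj ℳ n x) = proj ℳ' n (f x) := by
  induction x using Decomposition.inductionOn ℳ with
  | zero => simp
  | @homogeneous i x =>
    by_cases hin : i = n
    · subst hin
      rw [proj_of_mem_same ℳ x.2, proj_of_mem_same ℳ' (hf i x x.2)]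
    · rw [proj_of_mem_ne ℳ x.2 hin, proj_of_mem_ne ℳ' (hf i x x.2) hin, map_zero]
  | add x y hx hy => simp only [map_add, hx, hy]

/-- The graded part of an additive map: on `ℳ k` it is `f` followed by the projection to `ℳ' k`. -/
noncomputable def gradedPart (f : M →+ M') : M →+ M' :=
  (DirectSum.coeAddMonoidHom ℳ').comp <|
    (DirectSum.map fun k => (projTo ℳ' k).comp (f.comp (ℳ k).subtype)).comp
      (decomposeAddEquiv ℳ).toAddMonoidHom

lemma gradedPart_of_mem (f : M →+ M') {k : ℤ} {x : M} (hx : x ∈ ℳ k) :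
    gradedPart ℳ ℳ' f x = proj ℳ' k (f x) := by
  classical
  have hdec : decomposeAddEquiv ℳ x = of (fun i => ℳ i) k ⟨x, hx⟩ := decompose_of_mem ℳ hx
  simp only [gradedPart, AddMonoidHom.comp_apply, AddEquiv.coe_toAddMonoidHom, hdec, map_of,
    coeAddMonoidHom_of]
  rfl

lemma gradedPart_mem (f : M →+ M') {k : ℤ} {x : M} (hx : x ∈ ℳ k) :
    gradedPart ℳ ℳ' f x ∈ ℳ' k := by
  rw [gradedPart_of_mem ℳ ℳ' f hx]
  exact proj_mem ℳ' k _

lemma gradedPart_eq_zero_of_mem {S : Type*} [SetLike S M] [AddSubgroupClass S M] {N : S}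
    (hN : SetLike.IsHomogeneous ℳ N) {f : M →+ M'} (hf : ∀ x ∈ N, f x = 0) {x : M} (hx : x ∈ N) :
    gradedPart ℳ ℳ' f x = 0 := by
  classical
  rw [← sum_proj ℳ x, map_sum]
  refine Finset.sum_eq_zero fun k _ => ?_
  rw [gradedPart_of_mem ℳ ℳ' f (proj_mem ℳ k x), hf (proj ℳ k x) (hN k hx), map_zero]

lemma sub_gradedPart_mem {S : Type*} [SetLike S M] [AddSubgroupClass S M] {N : S}
    (hN : SetLike.IsHomogeneous ℳ N) {f : M →+ M} (hf : ∀ x, x - f x ∈ N) (x : M) :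
    x - gradedPart ℳ ℳ f x ∈ N := by
  induction x using Decomposition.inductionOn ℳ with
  | zero => simp
  | @homogeneous k x =>
    have h : x - proj ℳ k (f x) = proj ℳ k (x - f x) := by rw [map_sub, proj_of_mem_same ℳ x.2]
    rw [gradedPart_of_mem ℳ ℳ f x.2, h]
    exact hN k (hf x)
  | add x y hx hy =>
    rw [map_add, add_sub_add_comm]
    exact add_mem hx hy

end Decomposition

section GradedModule

variable {A : Type*} [Ring A] (𝒜 : ℤ → AddSubgroup A)
variable {M : Type*} [AddCommGroup M] [Module A M] (ℳ : ℤ → AddSubgroup M) [Decomposition ℳ]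
  [SetLike.GradedSMul 𝒜 ℳ]

lemma eq_zero_of_mem_of_neg (hsupp : ∀ n : ℤ, n < 0 → 𝒜 n = ⊥) {i : ℤ} (hi : i < 0) {a : A}
    (ha : a ∈ 𝒜 i) : a = 0 := by
  rwa [hsupp i hi, AddSubgroup.mem_bot] at ha

lemma proj_smul_of_mem {i : ℤ} {a : A} (ha : a ∈ 𝒜 i) (n : ℤ) (x : M) :
    proj ℳ n (a • x) = a • proj ℳ (n - i) x := by
  induction x using Decomposition.inductionOn ℳ with
  | zero => simp
  | @homogeneous k x =>
    have hax : a • (x : M) ∈ ℳ (i + k) := SetLike.GradedSMul.smul_mem ha x.2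
    by_cases hk : k = n - i
    · subst hk
      rw [add_sub_cancel] at hax
      rw [proj_of_mem_same ℳ x.2, proj_of_mem_same ℳ hax]
    · rw [proj_of_mem_ne ℳ x.2 hk, proj_of_mem_ne ℳ hax (by omega), smul_zero]
  | add x y hx hy => simp only [smul_add, map_add, hx, hy]

lemma gradedPart_smul_of_mem_zero {f : M →+ M} (hf : ∀ c ∈ 𝒜 0, ∀ x, f (c • x) = c • f x)
    {c : A} (hc : c ∈ 𝒜 0) (x : M) : gradedPart ℳ ℳ f (c • x) = c • gradedPart ℳ ℳ f x := by
  induction x using Decomposition.inductionOn ℳ with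
  | zero => simp
  | @homogeneous k x =>
    have hcx : c • (x : M) ∈ ℳ k := by simpa using SetLike.GradedSMul.smul_mem hc x.2
    rw [gradedPart_of_mem ℳ ℳ f hcx, gradedPart_of_mem ℳ ℳ f x.2, hf c hc, proj_smul_of_mem 𝒜 ℳ hc,
      sub_zero]
  | add x y hx hy => simp only [smul_add, map_add, hx, hy]

variable [GradedRing 𝒜]

/-- The projection `a ↦ a₀`, a ring homomorphism because `A` is concentrated in degrees `≥ 0`. -/
noncomputable def projZero (hsupp : ∀ n : ℤ, n < 0 → 𝒜 n = ⊥) : A →+* A where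
  toFun := proj 𝒜 0
  map_one' := proj_of_mem_same 𝒜 SetLike.GradedOne.one_mem
  map_zero' := map_zero _
  map_add' := map_add _
  map_mul' a b := by
    induction a using Decomposition.inductionOn 𝒜 with
    | zero => simp
    | @homogeneous i a =>
      have h := coe_decompose_mul_add_of_left_mem 𝒜 (j := -i) (b := b) a.2
      rw [add_neg_cancel] at h
      rw [proj_apply, h]
      rcases lt_trichotomy i 0 with hi | rfl | hi
      · simp [eq_zero_of_mem_of_neg 𝒜 hsupp hi a.2]
      · rw [proj_of_mem_same 𝒜 a.2, neg_zero]
        rfl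
      · rw [proj_of_mem_ne 𝒜 a.2 hi.ne', zero_mul,
          eq_zero_of_mem_of_neg 𝒜 hsupp (neg_neg_of_pos hi) (decompose 𝒜 b (-i)).2, mul_zero]
    | add a a' ha ha' => simp only [add_mul, map_add, ha, ha']

lemma projZero_apply (hsupp : ∀ n : ℤ, n < 0 → 𝒜 n = ⊥) (a : A) :
    projZero 𝒜 hsupp a = proj 𝒜 0 a := rfl

end GradedModule

section PosSpan

variable {A : Type*} [Ring A] {𝒜 : ℤ → AddSubgroup A}
variable {M : Type*} [AddCommGroup M] [Module A M]

variable (𝒜) in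
/-- The submodule `A₊·N`. -/
def posSpan (N : Submodule A M) : Submodule A M :=
  Submodule.span A {x | ∃ n : ℤ, 0 < n ∧ ∃ a ∈ 𝒜 n, ∃ y ∈ N, x = a • y}

lemma smul_mem_posSpan {N : Submodule A M} {n : ℤ} (hn : 0 < n) {a : A} (ha : a ∈ 𝒜 n) {y : M}
    (hy : y ∈ N) : a • y ∈ posSpan 𝒜 N :=
  Submodule.subset_span ⟨n, hn, a, ha, y, hy, rfl⟩

lemma posSpan_le_self (N : Submodule A M) : posSpan 𝒜 N ≤ N :=
  Submodule.span_le.mpr <| by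
    rintro _ ⟨n, -, a, -, y, hy, rfl⟩
    exact N.smul_mem a hy

lemma posSpan_mono {N N' : Submodule A M} (h : N ≤ N') : posSpan 𝒜 N ≤ posSpan 𝒜 N' :=
  Submodule.span_mono <| by
    rintro _ ⟨n, hn, a, ha, y, hy, rfl⟩
    exact ⟨n, hn, a, ha, y, h hy, rfl⟩

lemma map_posSpan_le {M' : Type*} [AddCommGroup M'] [Module A M'] (f : M →ₗ[A] M')
    (N : Submodule A M) : (posSpan 𝒜 N).map f ≤ posSpan 𝒜 (N.map f) := by
  rw [posSpan, Submodule.map_span_le]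
  rintro _ ⟨n, hn, a, ha, y, hy, rfl⟩
  rw [map_smul]
  exact smul_mem_posSpan hn ha (Submodule.mem_map_of_mem hy)

lemma sub_projZero_smul_mem_posSpan [GradedRing 𝒜] (hsupp : ∀ n : ℤ, n < 0 → 𝒜 n = ⊥) (a : A)
    {N : Submodule A M} {y : M} (hy : y ∈ N) : (a - projZero 𝒜 hsupp a) • y ∈ posSpan 𝒜 N := by
  induction a using Decomposition.inductionOn 𝒜 with
  | zero => simp
  | @homogeneous i a =>
    rcases lt_trichotomy i 0 with hi | rfl | hi
    · simp [eq_zero_of_mem_of_neg 𝒜 hsupp hi a.2]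
    · rw [projZero_apply, proj_of_mem_same 𝒜 a.2, sub_self, zero_smul]
      exact zero_mem _
    · rw [projZero_apply, proj_of_mem_ne 𝒜 a.2 hi.ne', sub_zero]
      exact smul_mem_posSpan hi a.2 hy
  | add a a' ha ha' =>
    rw [map_add, add_sub_add_comm, add_smul]
    exact add_mem ha ha'

variable (ℳ : ℤ → AddSubgroup M)

def spanBelow (N : Submodule A M) (d : ℤ) : Submodule A M :=
  Submodule.span A {z | z ∈ N ∧ ∃ e < d, z ∈ ℳ e}

lemma spanBelow_le_self (N : Submodule A M) (d : ℤ) : spanBelow ℳ N d ≤ N :=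
  Submodule.span_le.mpr fun _ hz => hz.1

lemma spanBelow_mono (N : Submodule A M) {d d' : ℤ} (h : d ≤ d') :
    spanBelow ℳ N d ≤ spanBelow ℳ N d' :=
  Submodule.span_mono fun _ ⟨hz, e, he, hze⟩ => ⟨hz, e, he.trans_le h, hze⟩

lemma mem_spanBelow {N : Submodule A M} {z : M} (hz : z ∈ N) {e d : ℤ} (he : e < d)
    (hze : z ∈ ℳ e) : z ∈ spanBelow ℳ N d :=
  Submodule.subset_span ⟨hz, e, he, hze⟩

variable [GradedRing 𝒜] [Decomposition ℳ] [SetLike.GradedSMul 𝒜 ℳ]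

lemma proj_mem_posSpan_spanBelow (hsupp : ∀ n : ℤ, n < 0 → 𝒜 n = ⊥) {N : Submodule A M}
    (hN : N.IsHomogeneous ℳ) {y : M} (hy : y ∈ posSpan 𝒜 N) (d : ℤ) :
    proj ℳ d y ∈ posSpan 𝒜 (spanBelow ℳ N d) := by
  induction hy using Submodule.span_induction generalizing d with
  | mem x hx =>
    obtain ⟨n, hn, a, ha, y, hy, rfl⟩ := hx
    rw [proj_smul_of_mem 𝒜 ℳ ha]
    exact smul_mem_posSpan hn ha (mem_spanBelow ℳ (hN _ hy) (by omega) (proj_mem ℳ _ y))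
  | zero => simp
  | add x y _ _ hx hy =>
    rw [map_add]
    exact add_mem (hx d) (hy d)
  | smul b x _ hx =>
    induction b using Decomposition.inductionOn 𝒜 with
    | zero => simp
    | @homogeneous i b =>
      rcases lt_or_ge i 0 with hi | hi
      · simp [eq_zero_of_mem_of_neg 𝒜 hsupp hi b.2]
      · rw [proj_smul_of_mem 𝒜 ℳ b.2]
        exact posSpan_mono (spanBelow_mono ℳ N (by omega)) (Submodule.smul_mem _ _ (hx (d - i)))
    | add b b' hb hb' =>
      rw [add_smul, map_add]
      exact add_mem hb hb'

lemma isHomogeneous_posSpan (hsupp : ∀ n : ℤ, n < 0 → 𝒜 n = ⊥) {N : Submodule A M}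
    (hN : N.IsHomogeneous ℳ) : (posSpan 𝒜 N).IsHomogeneous ℳ := fun d _ hy =>
  posSpan_mono (spanBelow_le_self ℳ N d) (proj_mem_posSpan_spanBelow ℳ hsupp hN hy d)

/-- Graded Nakayama lemma. -/
theorem le_of_le_sup_posSpan (hsupp : ∀ n : ℤ, n < 0 → 𝒜 n = ⊥) {d₀ : ℤ}
    (hbdd : ∀ m < d₀, ℳ m = ⊥) {N L : Submodule A M} (hN : N.IsHomogeneous ℳ)
    (hL : L.IsHomogeneous ℳ) (h : N ≤ L ⊔ posSpan 𝒜 N) : N ≤ L := by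
  classical
  have base : spanBelow ℳ N d₀ ≤ L := Submodule.span_le.mpr <| by
    rintro z ⟨-, e, he, hze⟩
    rw [hbdd e he, AddSubgroup.mem_bot] at hze
    rw [hze]
    exact zero_mem _
  have step : ∀ d, spanBelow ℳ N d ≤ L → spanBelow ℳ N (d + 1) ≤ L := by
    intro d hd
    refine Submodule.span_le.mpr ?_
    rintro z ⟨hzN, e, he, hze⟩
    obtain ⟨m, hm, y, hy, rfl⟩ := Submodule.mem_sup.mp (h hzN)
    rw [SetLike.mem_coe, ← proj_of_mem_same ℳ hze, map_add]
    have hy' := proj_mem_posSpan_spanBelow ℳ hsupp hN hy e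
    refine add_mem (hL e hm) (posSpan_le_self L (posSpan_mono ?_ hy'))
    exact (spanBelow_mono ℳ N (by omega)).trans hd
  have key : ∀ d ≥ d₀, spanBelow ℳ N d ≤ L := fun d hd =>
    Int.leInduction base (fun d _ => step d) d hd
  intro x hx
  rw [← sum_proj ℳ x]
  refine Submodule.sum_mem _ fun n _ => key (max d₀ (n + 1)) (le_max_left _ _) ?_
  exact mem_spanBelow ℳ (hN n hx) ((lt_add_one n).trans_le (le_max_right _ _)) (proj_mem ℳ n x)

end PosSpan

section GradedMap

variable {A : Type*} [Ring A] (𝒜 : ℤ → AddSubgroup A) [GradedRing 𝒜]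
variable {M : Type*} [AddCommGroup M] [Module A M] (ℳ : ℤ → AddSubgroup M) [Decomposition ℳ]
variable {M' : Type*} [AddCommGroup M'] [Module A M'] (ℳ' : ℤ → AddSubgroup M')
  [Decomposition ℳ']

lemma map_proj_of_span_range_eq_top [SetLike.GradedSMul 𝒜 ℳ] [SetLike.GradedSMul 𝒜 ℳ']
    {N : Type*} [AddCommGroup N] (𝒩 : ℤ → AddSubgroup N) [Decomposition 𝒩] {g : N →+ M}
    (hg : ∀ n, ∀ x ∈ 𝒩 n, g x ∈ ℳ n) (hspan : Submodule.span A (Set.range g) = ⊤)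
    (f : M →ₗ[A] M') (hfg : ∀ n, ∀ x ∈ 𝒩 n, f (g x) ∈ ℳ' n) (n : ℤ) (x : M) :
    f (proj ℳ n x) = proj ℳ' n (f x) := by
  have hx : x ∈ Submodule.span A (Set.range g) := hspan ▸ Submodule.mem_top
  induction hx using Submodule.span_induction generalizing n with
  | mem x hx =>
    obtain ⟨y, rfl⟩ := hx
    rw [← map_proj_of_map_mem 𝒩 ℳ g hg]
    exact map_proj_of_map_mem 𝒩 ℳ' (f.toAddMonoidHom.comp g) hfg n y
  | zero => simp
  | add x y _ _ hx hy => simp only [map_add, hx, hy]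
  | smul b x _ hx =>
    induction b using Decomposition.inductionOn 𝒜 with
    | zero => simp
    | @homogeneous i b =>
      rw [proj_smul_of_mem 𝒜 ℳ b.2, map_smul, map_smul, proj_smul_of_mem 𝒜 ℳ' b.2, hx]
    | add b b' hb hb' => simp only [add_smul, map_add, hb, hb']

variable {𝒜}

lemma grade_eq_bot_of_span_eq_top [SetLike.GradedSMul 𝒜 ℳ] (hsupp : ∀ n : ℤ, n < 0 → 𝒜 n = ⊥)
    {X : Set M} (hX : Submodule.span A X = ⊤) {d₀ : ℤ} (hXd : ∀ x ∈ X, ∀ m < d₀, proj ℳ m x = 0) :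
    ∀ m < d₀, ℳ m = ⊥ := by
  have key : ∀ y ∈ Submodule.span A X, ∀ m < d₀, proj ℳ m y = 0 := by
    intro y hy
    induction hy using Submodule.span_induction with
    | mem x hx => exact hXd x hx
    | zero => simp
    | add x y _ _ hx hy => intro m hm; rw [map_add, hx m hm, hy m hm, add_zero]
    | smul b x _ hx =>
      intro m hm
      induction b using Decomposition.inductionOn 𝒜 with
      | zero => simp
      | @homogeneous i b =>
        rcases lt_or_ge i 0 with hi | hi
        · simp [eq_zero_of_mem_of_neg 𝒜 hsupp hi b.2]
        · rw [proj_smul_of_mem 𝒜 ℳ b.2, hx (m - i) (by omega), smul_zero]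
      | add b b' hb hb' => rw [add_smul, map_add, hb, hb', add_zero]
  intro m hm
  refine (AddSubgroup.eq_bot_iff_forall _).mpr fun x hx => ?_
  rw [← proj_of_mem_same ℳ hx]
  exact key x (hX ▸ Submodule.mem_top) m hm

lemma exists_grade_eq_bot [SetLike.GradedSMul 𝒜 ℳ] [Module.Finite A M]
    (hsupp : ∀ n : ℤ, n < 0 → 𝒜 n = ⊥) :
    ∃ d₀ : ℤ, ∀ m < d₀, ℳ m = ⊥ := by
  classical
  obtain ⟨S, hS⟩ := Module.Finite.fg_top (R := A) (M := M)
  obtain ⟨d₀, hd₀⟩ := (S.biUnion fun x => (decompose ℳ x).support).bddBelow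
  refine ⟨d₀, grade_eq_bot_of_span_eq_top ℳ hsupp hS fun x hx m hm => ?_⟩
  by_contra hne
  have hm' : m ∈ S.biUnion fun x => (decompose ℳ x).support :=
    Finset.mem_biUnion.mpr
      ⟨x, hx, DFinsupp.mem_support_iff.mpr fun h => hne (by rw [proj_apply, h]; rfl)⟩
  exact absurd (hd₀ hm') (not_le.mpr hm)

variable {ℳ ℳ'}

lemma map_grade_eq_of_surjective {f : M →+ M'} (hf : ∀ n x, f (proj ℳ n x) = proj ℳ' n (f x))
    (hsurj : Function.Surjective f) (n : ℤ) : (ℳ n).map f = ℳ' n := by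
  refine le_antisymm ?_ fun y hy => ?_
  · rintro _ ⟨x, hx, rfl⟩
    rw [← proj_of_mem_same ℳ hx, hf]
    exact proj_mem ℳ' n _
  · obtain ⟨x, rfl⟩ := hsurj y
    exact ⟨proj ℳ n x, proj_mem ℳ n x, by rw [hf, proj_of_mem_same ℳ' hy]⟩

theorem surjective_of_sub_mem_posSpan [SetLike.GradedSMul 𝒜 ℳ']
    (hsupp : ∀ n : ℤ, n < 0 → 𝒜 n = ⊥) {d₀ : ℤ} (hbdd : ∀ m < d₀, ℳ' m = ⊥) (f : M →ₗ[A] M')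
    (hf : ∀ n x, f (proj ℳ n x) = proj ℳ' n (f x))
    (hcov : ∀ y, ∃ x, y - f x ∈ posSpan 𝒜 ⊤) : Function.Surjective f := by
  rw [← LinearMap.range_eq_top, eq_top_iff]
  refine le_of_le_sup_posSpan ℳ' hsupp hbdd (fun _ _ _ => Submodule.mem_top) ?_ ?_
  · rintro n _ ⟨x, rfl⟩
    exact ⟨proj ℳ n x, hf n x⟩
  · intro y _
    obtain ⟨x, hx⟩ := hcov y
    exact Submodule.mem_sup.mpr ⟨f x, ⟨x, rfl⟩, y - f x, hx, add_sub_cancel _ _⟩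

theorem injective_of_ker_le_posSpan [SetLike.GradedSMul 𝒜 ℳ]
    (hsupp : ∀ n : ℤ, n < 0 → 𝒜 n = ⊥) {d₀ : ℤ} (hbdd : ∀ m < d₀, ℳ m = ⊥)
    [Module.Projective A M'] (f : M →ₗ[A] M')
    (hf : ∀ n x, f (proj ℳ n x) = proj ℳ' n (f x)) (hsurj : Function.Surjective f)
    (hker : LinearMap.ker f ≤ posSpan 𝒜 ⊤) : Function.Injective f := by
  obtain ⟨g, hg⟩ := Module.projective_lifting_property f LinearMap.id hsurj
  -- `r` retracts `M` onto `ker f`, so it carries `A₊·M ⊇ ker f` into `A₊·ker f`.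
  set r : M →ₗ[A] M := LinearMap.id - g ∘ₗ f
  have hr : ∀ x, f (r x) = 0 := fun x => by
    simp [r, ← LinearMap.comp_apply f g, hg]
  have hK : LinearMap.ker f ≤ ⊥ ⊔ posSpan 𝒜 (LinearMap.ker f) := by
    intro x hx
    have hrx : r x = x := by simp [r, LinearMap.mem_ker.mp hx]
    rw [bot_sup_eq, ← hrx]
    refine posSpan_mono ?_ (map_posSpan_le r ⊤ ⟨x, hker hx, rfl⟩)
    rintro _ ⟨y, -, rfl⟩
    exact hr y
  have hKhom : (LinearMap.ker f).IsHomogeneous ℳ := fun n x hx => by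
    change f (proj ℳ n x) = 0
    rw [hf, LinearMap.mem_ker.mp hx, map_zero]
  rw [← LinearMap.ker_eq_bot, eq_bot_iff]
  exact le_of_le_sup_posSpan ℳ hsupp hbdd hKhom (fun n x hx => by simp_all) hK

end GradedMap

lemma grade_eq_bot_of_span_range_eq_top {A : Type*} [Ring A] {𝒜 : ℤ → AddSubgroup A}
    [GradedRing 𝒜] (hsupp : ∀ n : ℤ, n < 0 → 𝒜 n = ⊥) {M : Type*} [AddCommGroup M]
    (ℳ : ℤ → AddSubgroup M) [Decomposition ℳ] {M' : Type*} [AddCommGroup M'] [Module A M']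
    (ℳ' : ℤ → AddSubgroup M') [Decomposition ℳ'] [SetLike.GradedSMul 𝒜 ℳ'] {f : M →+ M'}
    (hf : ∀ n, ∀ x ∈ ℳ n, f x ∈ ℳ' n)
    (hspan : Submodule.span A (Set.range f) = ⊤) {d₀ : ℤ} (hbdd : ∀ m < d₀, ℳ m = ⊥) :
    ∀ m < d₀, ℳ' m = ⊥ := by
  refine grade_eq_bot_of_span_eq_top ℳ' hsupp hspan ?_
  rintro _ ⟨x, rfl⟩ m hm
  have hx : proj ℳ m x = 0 := by simpa [hbdd m hm] using proj_mem ℳ m x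
  rw [← map_proj_of_map_mem ℳ ℳ' f hf, hx, map_zero]

section DegreeZero

variable {A : Type*} [Ring A] {𝒜 : ℤ → AddSubgroup A} [GradedRing 𝒜]
  (hsupp : ∀ n : ℤ, n < 0 → 𝒜 n = ⊥)

/-- With `P` a summand of `A^(P)`, this is `Σ aₓ x ↦ Σ (aₓ)₀ x`. -/
lemma exists_projZero_semilinear_endo {P : Type*} [AddCommGroup P] [Module A P]
    [Module.Projective A P] :
    ∃ ψ : P →ₛₗ[projZero 𝒜 hsupp] P,
      posSpan 𝒜 ⊤ ≤ LinearMap.ker ψ ∧ ∀ p, p - ψ p ∈ posSpan 𝒜 ⊤ := by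
  obtain ⟨σ, hσ⟩ := Module.projective_def.mp ‹Module.Projective A P›
  let π := projZero 𝒜 hsupp
  let mapRangeπ : (P →₀ A) →ₛₗ[π] (P →₀ A) :=
    { toFun := Finsupp.mapRange π π.map_zero
      map_add' := Finsupp.mapRange_add (map_add π)
      map_smul' := fun b f => by ext; simp }
  refine ⟨(Finsupp.linearCombination A id).comp (mapRangeπ.comp σ), ?_, fun p => ?_⟩
  · refine Submodule.span_le.mpr ?_
    rintro _ ⟨n, hn, a, ha, y, -, rfl⟩
    rw [SetLike.mem_coe, LinearMap.mem_ker, LinearMap.map_smulₛₗ, projZero_apply,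
      proj_of_mem_ne 𝒜 ha hn.ne', zero_smul]
  · have hp : p - (Finsupp.linearCombination A id) (mapRangeπ (σ p)) =
        Finsupp.linearCombination A id (σ p - mapRangeπ (σ p)) := by rw [map_sub, hσ p]
    rw [LinearMap.comp_apply, LinearMap.comp_apply, hp, Finsupp.linearCombination_apply,
      Finsupp.sum]
    refine Submodule.sum_mem _ fun x _ => ?_
    simpa [mapRangeπ] using
      sub_projZero_smul_mem_posSpan hsupp (σ p x) (Submodule.mem_top (x := x))

end DegreeZero

section BaseChange

lemma posSMulSubmodule_eq_posSpan_top {A : Type u} [Ring A] (𝒜 : ℤ → AddSubgroup A)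
    (P : Type u) [AddCommGroup P] [Module A P] :
    posSMulSubmodule 𝒜 P = posSpan 𝒜 (⊤ : Submodule A P) := by
  simp [posSMulSubmodule, posSpan]

lemma exists_graded_section {A P : Type u} [Ring A] {𝒜 : ℤ → AddSubgroup A} [GradedRing 𝒜]
    (hsupp : ∀ n : ℤ, n < 0 → 𝒜 n = ⊥) {A₀ : Subring A} (hA₀ : (A₀ : Set A) = 𝒜 0)
    [AddCommGroup P] [Module A P] (ℳ : ℤ → AddSubgroup P) [Decomposition ℳ]
    [SetLike.GradedSMul 𝒜 ℳ] [Module.Projective A P] :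
    ∃ s : (P ⧸ posSMulSubmodule 𝒜 P) →ₗ[A₀] P,
      (∀ p, p - s (Submodule.Quotient.mk p) ∈ posSpan 𝒜 ⊤) ∧
      ∀ k p, p ∈ ℳ k → s (Submodule.Quotient.mk p) ∈ ℳ k := by
  rw [posSMulSubmodule_eq_posSpan_top]
  obtain ⟨ψ, hψ_ker, hψ_sub⟩ := exists_projZero_semilinear_endo hsupp (P := P)
  set N := posSpan 𝒜 (⊤ : Submodule A P)
  have hN : N.IsHomogeneous ℳ := isHomogeneous_posSpan ℳ hsupp fun _ _ _ => Submodule.mem_top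
  let χ := gradedPart ℳ ℳ ψ.toAddMonoidHom
  have hψ_smul : ∀ c ∈ 𝒜 0, ∀ x, ψ (c • x) = c • ψ x := fun c hc x => by
    rw [LinearMap.map_smulₛₗ, projZero_apply, proj_of_mem_same 𝒜 hc]
  let χ₀ : P →ₗ[A₀] P :=
    { toFun := χ
      map_add' := map_add χ
      map_smul' := fun c x =>
        gradedPart_smul_of_mem_zero 𝒜 ℳ hψ_smul
          (by rw [← SetLike.mem_coe, ← hA₀]; exact c.2) x }
  have hχ₀ : N.restrictScalars A₀ ≤ LinearMap.ker χ₀ := fun x hx =>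
    gradedPart_eq_zero_of_mem ℳ ℳ hN (fun x hx => LinearMap.mem_ker.mp (hψ_ker hx)) hx
  exact ⟨(N.restrictScalars A₀).liftQ χ₀ hχ₀ ∘ₗ
    (Submodule.Quotient.restrictScalarsEquiv A₀ N).symm.toLinearMap,
    sub_gradedPart_mem ℳ hN hψ_sub, fun k p hp => gradedPart_mem ℳ ℳ _ hp⟩

lemma span_range_eq_top_of_isBaseChangeAlong {A : Type u} [Ring A] {A₀ : Subring A}
    {Q E : Type u} [AddCommGroup Q] [Module A₀ Q] [AddCommGroup E] [Module A E]
    {ι : Q →ₗ[A₀] E} (hE : IsBaseChangeAlong A A₀ Q E ι) :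
    Submodule.span A (Set.range ι) = ⊤ := by
  set S := Submodule.span A (Set.range ι)
  obtain ⟨F, -, huniq⟩ := hE (E ⧸ S) 0
  have hmk : S.mkQ = 0 :=
    (huniq S.mkQ fun q => (Submodule.Quotient.mk_eq_zero S).mpr (Submodule.subset_span ⟨q, rfl⟩))
      |>.trans (huniq 0 fun _ => rfl).symm
  rw [← S.ker_mkQ, hmk, LinearMap.ker_zero]

lemma exists_sub_mem_posSpan {A : Type*} [Ring A] {𝒜 : ℤ → AddSubgroup A} [GradedRing 𝒜]
    (hsupp : ∀ n : ℤ, n < 0 → 𝒜 n = ⊥) {A₀ : Subring A} (hA₀ : (A₀ : Set A) = 𝒜 0)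
    {Q E : Type*} [AddCommGroup Q] [Module A Q] [AddCommGroup E] [Module A E]
    {ι : Q →ₗ[A₀] E} (hι : Submodule.span A (Set.range ι) = ⊤) (x : E) :
    ∃ q, x - ι q ∈ posSpan 𝒜 ⊤ := by
  have hx : x ∈ Submodule.span A (Set.range ι) := hι ▸ Submodule.mem_top
  induction hx using Submodule.span_induction with
  | mem x hx =>
    obtain ⟨q, rfl⟩ := hx
    exact ⟨q, by simp⟩
  | zero => exact ⟨0, by simp⟩
  | add x y _ _ hx hy =>
    obtain ⟨q, hq⟩ := hx
    obtain ⟨q', hq'⟩ := hy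
    exact ⟨q + q', by rw [map_add, add_sub_add_comm]; exact add_mem hq hq'⟩
  | smul b x _ hx =>
    obtain ⟨q, hq⟩ := hx
    let b₀ : A₀ := ⟨projZero 𝒜 hsupp b, show _ ∈ (A₀ : Set A) from hA₀ ▸ proj_mem 𝒜 0 b⟩
    have h : b • x - ι (b₀ • q) = b • (x - ι q) + (b - projZero 𝒜 hsupp b) • ι q := by
      rw [map_smul, Subring.smul_def, smul_sub, sub_smul]
      abel
    exact ⟨b₀ • q, h ▸ add_mem (Submodule.smul_mem _ b hq)
      (sub_projZero_smul_mem_posSpan hsupp b Submodule.mem_top)⟩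

lemma ker_le_posSpan_of_comp_eq {A P E : Type u} [Ring A] {𝒜 : ℤ → AddSubgroup A}
    [GradedRing 𝒜] (hsupp : ∀ n : ℤ, n < 0 → 𝒜 n = ⊥) {A₀ : Subring A}
    (hA₀ : (A₀ : Set A) = 𝒜 0) [AddCommGroup P] [Module A P] [AddCommGroup E] [Module A E]
    {s : (P ⧸ posSMulSubmodule 𝒜 P) →ₗ[A₀] P}
    (hs : ∀ p, p - s (Submodule.Quotient.mk p) ∈ posSpan 𝒜 ⊤)
    {ι : (P ⧸ posSMulSubmodule 𝒜 P) →ₗ[A₀] E} (hι : Submodule.span A (Set.range ι) = ⊤)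
    {F : E →ₗ[A] P} (hF : ∀ t, F (ι t) = s t) : LinearMap.ker F ≤ posSpan 𝒜 ⊤ := by
  intro x hx
  obtain ⟨t, ht⟩ := exists_sub_mem_posSpan hsupp hA₀ hι x
  obtain ⟨p, rfl⟩ := Submodule.Quotient.mk_surjective _ t
  have hsp : s (Submodule.Quotient.mk p) ∈ posSpan 𝒜 ⊤ := by
    have h := map_posSpan_le F ⊤ ⟨_, ht, rfl⟩
    rw [map_sub, hF, LinearMap.mem_ker.mp hx, zero_sub, neg_mem_iff] at h
    exact posSpan_mono le_top h
  have hp : Submodule.Quotient.mk p = (0 : P ⧸ posSMulSubmodule 𝒜 P) := by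
    rw [Submodule.Quotient.mk_eq_zero, posSMulSubmodule_eq_posSpan_top]
    simpa using add_mem (hs p) hsp
  simpa [hp] using ht

end BaseChange

end GradedProjective

open GradedProjective

/-- Let `A` be an `ℕ`-graded ring (a `ℤ`-graded ring with support in `ℕ`) with degree
zero subring `A₀`, and `P` a finitely generated `ℤ`-graded projective `A`-module. Then
`P ≅ (P/P·A₊) ⊗_{A₀} A` as graded `A`-modules, where `T(P) = P/P·A₊` carries its induced
grading; here the tensor product is encoded by any graded `A`-module `E` receiving a
degree-preserving `A₀`-linear map `ι` from `T(P)` and satisfying the universal property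
of base change. In particular every finitely generated graded projective module over an
`ℕ`-graded ring is extended from its degree-zero subring. -/
theorem graded_projective_extended (A : Type u) [Ring A] (𝒜 : ℤ → AddSubgroup A)
    [GradedRing 𝒜] (hsupp : ∀ n : ℤ, n < 0 → 𝒜 n = ⊥)
    (A₀ : Subring A) (hA₀ : (A₀ : Set A) = (𝒜 0 : Set A))
    (P : Type u) [AddCommGroup P] [Module A P] (ℳ : ℤ → AddSubgroup P)
    [DirectSum.Decomposition ℳ] [SetLike.GradedSMul 𝒜 ℳ]
    [Module.Finite A P] [Module.Projective A P]
    (E : Type u) [AddCommGroup E] [Module A E] (ℰ : ℤ → AddSubgroup E)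
    [DirectSum.Decomposition ℰ] [SetLike.GradedSMul 𝒜 ℰ]
    (ι : (P ⧸ posSMulSubmodule 𝒜 P) →ₗ[A₀] E)
    (hι : ∀ (κ : ℤ) (x : P), x ∈ ℳ κ → ι (Submodule.Quotient.mk x) ∈ ℰ κ)
    (hE : IsBaseChangeAlong A A₀ (P ⧸ posSMulSubmodule 𝒜 P) E ι) :
    ∃ e : E ≃ₗ[A] P,
      ∀ n : ℤ, (ℰ n).map e.toLinearMap.toAddMonoidHom = ℳ n := by
  obtain ⟨s, hs_sub, hs_mem⟩ := exists_graded_section hsupp hA₀ ℳ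
  obtain ⟨F, hF, -⟩ := hE P s
  have hspan := span_range_eq_top_of_isBaseChangeAlong hE
  set j : P →+ E := ι.toAddMonoidHom.comp (posSMulSubmodule 𝒜 P).mkQ.toAddMonoidHom
  have hj : Submodule.span A (Set.range j) = ⊤ := by
    rwa [← (Submodule.mkQ_surjective (posSMulSubmodule 𝒜 P)).range_comp ι] at hspan
  have hFproj : ∀ n x, F (proj ℰ n x) = proj ℳ n (F x) :=
    map_proj_of_span_range_eq_top 𝒜 ℰ ℳ ℳ hι hj F fun n x hx => (hF _).symm ▸ hs_mem n x hx
  obtain ⟨d₀, hd₀⟩ := exists_grade_eq_bot ℳ hsupp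
  have hd₀E := grade_eq_bot_of_span_range_eq_top hsupp ℳ ℰ hι hj hd₀
  have hsurj : Function.Surjective F :=
    surjective_of_sub_mem_posSpan hsupp hd₀ F hFproj fun p => ⟨j p, (hF _).symm ▸ hs_sub p⟩
  have hinj : Function.Injective F := injective_of_ker_le_posSpan hsupp hd₀E F hFproj hsurj
    (ker_le_posSpan_of_comp_eq hsupp hA₀ hs_sub hspan hF)
  exact ⟨LinearEquiv.ofBijective F ⟨hinj, hsurj⟩, map_grade_eq_of_surjective hFproj hsurj⟩
end

section
/- Let A be an ℕ-graded ring, P a finitely generated ℤ-graded projective right A-module, and for λ ∈ ℤ let F^λP be the A-submodule of P generated by ⋃_{ω ≤ λ} P_ω. Then F^λP is a graded A-submodule of P, and the assignment P ↦ F^λP preserves (split) short exact sequences of finitely generated graded projective A-modules. -/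
/-!
`F^λ P` is spanned by homogeneous elements, so it is a homogeneous submodule. For exactness,
surjectivity of `F^λ P → F^λ P''` holds degreewise for any surjective degree-preserving map.
For the kernel, projectivity of `P''` gives a section `s` of `g`, and the degree-preserving part
of `s` is again a section of `g`. Then `1 - s g` is a degree-preserving projection of `P` onto
`ker g = f P'`, and it carries each homogeneous generator of `F^λ P` to the image of a generator
of `F^λ P'` of the same degree.
-/

universe u

/-- `F^λ P`: the `A`-submodule of a graded module `P` generated by the homogeneous
elements of degree at most `λ`. -/
def filtration {A : Type u} [Ring A] (P : Type u) [AddCommGroup P] [Module A P]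
    (ℳ : ℤ → AddSubgroup P) (lam : ℤ) : Submodule A P :=
  Submodule.span A {x : P | ∃ ω ≤ lam, x ∈ ℳ ω}

open DirectSum SetLike

section Decomposition

variable {ι A M N : Type*} [DecidableEq ι] [Ring A] [AddCommGroup M] [Module A M]
  [AddCommGroup N] [Module A N] (ℳ : ι → AddSubgroup M) (𝒩 : ι → AddSubgroup N)

def IsDegreePreserving (f : M → N) : Prop :=
  ∀ i x, x ∈ ℳ i → f x ∈ 𝒩 i

variable [Decomposition ℳ] [Decomposition 𝒩]

/-- The degree-preserving part `x ↦ ∑ⱼ (s xⱼ)ⱼ` of an additive map `s`. -/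
def gradedPartAddHom (s : M →+ N) : M →+ N :=
  (toAddMonoid fun j => (𝒩 j).subtype.comp <| (DFinsupp.evalAddMonoidHom j).comp <|
    (decomposeAddEquiv 𝒩).toAddMonoidHom.comp <| s.comp (ℳ j).subtype).comp
    (decomposeAddEquiv ℳ).toAddMonoidHom

theorem DirectSum.Decomposition.linearMap_ext {f g : M →ₗ[A] N} (h : ∀ i, ∀ x ∈ ℳ i, f x = g x) :
    f = g := by
  ext x
  induction x using Decomposition.inductionOn ℳ with
  | zero => simp
  | homogeneous m => exact h _ _ m.2
  | add x y hx hy => simp [hx, hy]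

variable {ℳ 𝒩}

theorem gradedPartAddHom_apply_of_mem (s : M →+ N) {x : M} {j : ι} (hx : x ∈ ℳ j) :
    gradedPartAddHom ℳ 𝒩 s x = decompose 𝒩 (s x) j := by
  simp [gradedPartAddHom, decompose_of_mem ℳ hx]
  rfl

theorem IsDegreePreserving.decompose_map {F : Type*} [FunLike F M N] [AddMonoidHomClass F M N]
    {f : F} (hf : IsDegreePreserving ℳ 𝒩 f) (x : M) (i : ι) :
    (decompose 𝒩 (f x) i : N) = f (decompose ℳ x i) := by
  induction x using Decomposition.inductionOn ℳ with
  | zero => simp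
  | homogeneous m =>
    rw [decompose_of_mem 𝒩 (hf _ _ m.2), decompose_of_mem ℳ m.2, coe_of_apply, coe_of_apply]
    split_ifs <;> simp
  | add x y hx hy => simp [decompose_add, hx, hy]

theorem IsDegreePreserving.mem_of_map_mem {F : Type*} [FunLike F M N] [AddMonoidHomClass F M N]
    {f : F} (hf : IsDegreePreserving ℳ 𝒩 f) (hinj : Function.Injective f) {x : M} {i : ι}
    (hx : f x ∈ 𝒩 i) : x ∈ ℳ i := by
  have : f (decompose ℳ x i) = f x := by rw [← hf.decompose_map, decompose_of_mem_same 𝒩 hx]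
  exact hinj this ▸ (decompose ℳ x i).2

end Decomposition

section GradedModule

variable {ι A M N : Type*} [AddCommGroup ι] [DecidableEq ι] [Ring A]
  [AddCommGroup M] [Module A M] [AddCommGroup N] [Module A N]
  {ℳ : ι → AddSubgroup M} {𝒩 : ι → AddSubgroup N} [Decomposition ℳ] [Decomposition 𝒩]

theorem decompose_smul_of_mem {𝒜 : ι → AddSubgroup A} [GradedSMul 𝒜 ℳ] {a : A} {i : ι}
    (ha : a ∈ 𝒜 i) (x : M) (n : ι) :
    (decompose ℳ (a • x) n : M) = a • (decompose ℳ x (n - i) : M) := by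
  induction x using Decomposition.inductionOn ℳ with
  | zero => simp
  | @homogeneous j m =>
    rw [decompose_of_mem ℳ (GradedSMul.smul_mem ha m.2), decompose_of_mem ℳ m.2,
      coe_of_apply, coe_of_apply]
    by_cases h : i +ᵥ j = n
    · rw [if_pos h, if_pos (by rw [← h, vadd_eq_add, add_sub_cancel_left])]
    · rw [if_neg h, if_neg (by rintro rfl; exact h (add_sub_cancel _ _))]
      simp
  | add x y hx hy => simp [smul_add, decompose_add, hx, hy]

theorem Submodule.isHomogeneous_span (𝒜 : ι → AddSubgroup A) [GradedRing 𝒜] [GradedSMul 𝒜 ℳ]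
    {s : Set M} (hs : ∀ x ∈ s, IsHomogeneousElem ℳ x) :
    (Submodule.span A s).IsHomogeneous ℳ := by
  intro n x hx
  induction hx using Submodule.span_induction generalizing n with
  | mem y hy =>
    obtain ⟨j, hj⟩ := hs y hy
    rw [decompose_of_mem ℳ hj, coe_of_apply]
    split_ifs
    exacts [Submodule.subset_span hy, Submodule.zero_mem _]
  | zero => simp
  | add y z _ _ hy hz => simpa [decompose_add] using Submodule.add_mem _ (hy n) (hz n)
  | smul a y _ hy =>
    induction a using Decomposition.inductionOn 𝒜 generalizing n with
    | zero => simp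
    | homogeneous a =>
      rw [decompose_smul_of_mem a.2]
      exact Submodule.smul_mem _ _ (hy _)
    | add a b ha hb => simpa [add_smul, decompose_add] using Submodule.add_mem _ (ha n) (hb n)

end GradedModule

section GradedPart

variable {ι A M N Q : Type*} [AddCommGroup ι] [DecidableEq ι] [Ring A]
  [AddCommGroup M] [Module A M] [AddCommGroup N] [Module A N] [AddCommGroup Q] [Module A Q]
  (ℳ : ι → AddSubgroup M) (𝒩 : ι → AddSubgroup N) {𝒬 : ι → AddSubgroup Q}
  [Decomposition ℳ] [Decomposition 𝒩] [Decomposition 𝒬]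

def LinearMap.gradedPart (𝒜 : ι → AddSubgroup A) [GradedRing 𝒜] [GradedSMul 𝒜 ℳ]
    [GradedSMul 𝒜 𝒩] (s : M →ₗ[A] N) : M →ₗ[A] N where
  __ := gradedPartAddHom ℳ 𝒩 s.toAddMonoidHom
  map_smul' a x := by
    induction a using Decomposition.inductionOn 𝒜 generalizing x with
    | zero => simp
    | @homogeneous i a =>
      induction x using Decomposition.inductionOn ℳ with
      | zero => simp
      | @homogeneous j x =>
        have hax : a.1 • x.1 ∈ ℳ (i + j) := GradedSMul.smul_mem a.2 x.2
        simp only [AddMonoidHom.toFun_eq_coe, RingHom.id_apply,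
          gradedPartAddHom_apply_of_mem _ x.2, gradedPartAddHom_apply_of_mem _ hax,
          LinearMap.toAddMonoidHom_coe, map_smul, decompose_smul_of_mem a.2]
        rw [add_sub_cancel_left]
      | add x y hx hy => simp_all [smul_add]
    | add a b ha hb => simp_all [add_smul]

variable {ℳ 𝒩} (𝒜 : ι → AddSubgroup A) [GradedRing 𝒜] [GradedSMul 𝒜 ℳ] [GradedSMul 𝒜 𝒩]
  [GradedSMul 𝒜 𝒬]

theorem LinearMap.gradedPart_apply_of_mem (s : M →ₗ[A] N) {x : M} {j : ι} (hx : x ∈ ℳ j) :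
    gradedPart ℳ 𝒩 𝒜 s x = decompose 𝒩 (s x) j :=
  gradedPartAddHom_apply_of_mem _ hx

theorem LinearMap.isDegreePreserving_gradedPart (s : M →ₗ[A] N) :
    IsDegreePreserving ℳ 𝒩 (gradedPart ℳ 𝒩 𝒜 s) := fun j x hx => by
  rw [gradedPart_apply_of_mem 𝒜 s hx]
  exact (decompose 𝒩 (s x) j).2

theorem LinearMap.gradedPart_comp {g : N →ₗ[A] Q} (hg : IsDegreePreserving 𝒩 𝒬 g)
    (s : M →ₗ[A] N) : gradedPart ℳ 𝒬 𝒜 (g ∘ₗ s) = g ∘ₗ gradedPart ℳ 𝒩 𝒜 s :=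
  Decomposition.linearMap_ext ℳ fun _ _ hx => by
    rw [comp_apply, gradedPart_apply_of_mem 𝒜 _ hx, gradedPart_apply_of_mem 𝒜 _ hx, comp_apply,
      hg.decompose_map]

theorem LinearMap.gradedPart_id : gradedPart ℳ ℳ 𝒜 (LinearMap.id : M →ₗ[A] M) = LinearMap.id :=
  Decomposition.linearMap_ext ℳ fun _ _ hx => by
    rw [gradedPart_apply_of_mem 𝒜 _ hx, id_apply, decompose_of_mem_same ℳ hx]

end GradedPart

section Filtration

variable {A P' P P'' : Type u} [Ring A] [AddCommGroup P'] [Module A P'] [AddCommGroup P]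
  [Module A P] [AddCommGroup P''] [Module A P''] {ℳ' : ℤ → AddSubgroup P'}
  {ℳ : ℤ → AddSubgroup P} {ℳ'' : ℤ → AddSubgroup P''} (lam : ℤ)

theorem filtration_isHomogeneous (𝒜 : ℤ → AddSubgroup A) [GradedRing 𝒜] [Decomposition ℳ]
    [GradedSMul 𝒜 ℳ] : (filtration (A := A) P ℳ lam).IsHomogeneous ℳ :=
  Submodule.isHomogeneous_span 𝒜 fun _ ⟨ω, _, hx⟩ => ⟨ω, hx⟩

theorem map_filtration_le {g : P →ₗ[A] P''} (hg : IsDegreePreserving ℳ ℳ'' g) :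
    (filtration P ℳ lam).map g ≤ filtration P'' ℳ'' lam := by
  rw [filtration, Submodule.map_span_le]
  rintro x ⟨ω, hω, hx⟩
  exact Submodule.subset_span ⟨ω, hω, hg ω x hx⟩

variable [Decomposition ℳ'] [Decomposition ℳ]

theorem map_filtration_of_surjective [Decomposition ℳ''] {g : P →ₗ[A] P''}
    (hg : IsDegreePreserving ℳ ℳ'' g) (hsurj : Function.Surjective g) :
    (filtration P ℳ lam).map g = filtration P'' ℳ'' lam := by
  refine (map_filtration_le lam hg).antisymm (Submodule.span_le.mpr ?_)
  rintro x'' ⟨ω, hω, hx⟩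
  obtain ⟨x, rfl⟩ := hsurj x''
  refine ⟨decompose ℳ x ω, Submodule.subset_span ⟨ω, hω, (decompose ℳ x ω).2⟩, ?_⟩
  rw [← hg.decompose_map, decompose_of_mem_same ℳ'' hx]

/-- `π` factors through `f` by a degree-preserving map, because an injective degree-preserving
map reflects degrees. -/
theorem map_filtration_le_map_of_range_le {f : P' →ₗ[A] P} (hf : IsDegreePreserving ℳ' ℳ f)
    (hinj : Function.Injective f) {π : P →ₗ[A] P} (hπ : IsDegreePreserving ℳ ℳ π)
    (hrange : LinearMap.range π ≤ LinearMap.range f) :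
    (filtration P ℳ lam).map π ≤ (filtration P' ℳ' lam).map f := by
  rw [filtration, Submodule.map_span_le]
  rintro x ⟨ω, hω, hx⟩
  obtain ⟨y, hy⟩ := hrange (LinearMap.mem_range_self π x)
  have hyω : y ∈ ℳ' ω := hf.mem_of_map_mem hinj (hy ▸ hπ ω x hx)
  exact ⟨y, Submodule.subset_span ⟨ω, hω, hyω⟩, hy⟩

theorem map_filtration_eq_inf_ker {f : P' →ₗ[A] P} {g : P →ₗ[A] P''}
    (hf : IsDegreePreserving ℳ' ℳ f) (hg : IsDegreePreserving ℳ ℳ'' g)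
    (hinj : Function.Injective f) (hexact : LinearMap.range f = LinearMap.ker g)
    {s : P'' →ₗ[A] P} (hs : IsDegreePreserving ℳ'' ℳ s) (hgs : g ∘ₗ s = LinearMap.id) :
    (filtration P' ℳ' lam).map f = filtration P ℳ lam ⊓ LinearMap.ker g := by
  refine le_antisymm (le_inf (map_filtration_le lam hf) ?_) ?_
  · rw [Submodule.map_le_iff_le_comap, ← hexact]
    exact fun x _ => LinearMap.mem_range_self f x
  rintro x ⟨hx, hgx⟩
  set π := LinearMap.id - s ∘ₗ g
  have hπ : IsDegreePreserving ℳ ℳ π := fun i y hy => sub_mem hy (hs i _ (hg i y hy))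
  have hrange : LinearMap.range π ≤ LinearMap.range f := by
    rintro _ ⟨y, rfl⟩
    rw [hexact, LinearMap.mem_ker]
    simp [π, ← LinearMap.comp_apply g s, hgs]
  have hπx : π x = x := by simp [π, LinearMap.mem_ker.mp hgx]
  exact hπx ▸ map_filtration_le_map_of_range_le lam hf hinj hπ hrange ⟨x, hx, rfl⟩

end Filtration

theorem filtration_graded_and_exact_general (A : Type u) [Ring A] (𝒜 : ℤ → AddSubgroup A)
    [GradedRing 𝒜] (lam : ℤ) :
    (∀ (P : Type u) [AddCommGroup P] [Module A P] (ℳ : ℤ → AddSubgroup P)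
      [DirectSum.Decomposition ℳ] [SetLike.GradedSMul 𝒜 ℳ]
      [Module.Finite A P] [Module.Projective A P],
      ∀ x ∈ filtration (A := A) P ℳ lam, ∀ n : ℤ,
        (DirectSum.decompose ℳ x n : P) ∈ filtration (A := A) P ℳ lam) ∧
    (∀ (P' P P'' : Type u)
      [AddCommGroup P'] [Module A P'] [AddCommGroup P] [Module A P]
      [AddCommGroup P''] [Module A P'']
      (ℳ' : ℤ → AddSubgroup P') (ℳ : ℤ → AddSubgroup P) (ℳ'' : ℤ → AddSubgroup P'')
      [DirectSum.Decomposition ℳ'] [SetLike.GradedSMul 𝒜 ℳ']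
      [DirectSum.Decomposition ℳ] [SetLike.GradedSMul 𝒜 ℳ]
      [DirectSum.Decomposition ℳ''] [SetLike.GradedSMul 𝒜 ℳ'']
      [Module.Finite A P'] [Module.Projective A P']
      [Module.Finite A P] [Module.Projective A P]
      [Module.Finite A P''] [Module.Projective A P'']
      (f : P' →ₗ[A] P) (g : P →ₗ[A] P''),
      (∀ (n : ℤ) (x : P'), x ∈ ℳ' n → f x ∈ ℳ n) →
      (∀ (n : ℤ) (x : P), x ∈ ℳ n → g x ∈ ℳ'' n) →
      Function.Injective f → Function.Surjective g → LinearMap.range f = LinearMap.ker g →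
        (filtration P' ℳ' lam).map f = filtration P ℳ lam ⊓ LinearMap.ker g ∧
        (filtration P ℳ lam).map g = filtration P'' ℳ'' lam) := by
  refine ⟨fun P _ _ ℳ _ _ _ _ x hx n => filtration_isHomogeneous lam 𝒜 n hx, ?_⟩
  intro P' P P'' _ _ _ _ _ _ ℳ' ℳ ℳ'' _ _ _ _ _ _ _ _ _ _ _ _ f g hf hg hinj hsurj hexact
  obtain ⟨s, hgs⟩ := Module.projective_lifting_property g LinearMap.id hsurj
  have hgs₀ : g ∘ₗ s.gradedPart ℳ'' ℳ 𝒜 = LinearMap.id := by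
    rw [← LinearMap.gradedPart_comp 𝒜 hg, hgs, LinearMap.gradedPart_id]
  exact ⟨map_filtration_eq_inf_ker lam hf hg hinj hexact
      (s.isDegreePreserving_gradedPart 𝒜) hgs₀,
    map_filtration_of_surjective lam hg hsurj⟩

/-- Let `A` be an `ℕ`-graded ring and `λ ∈ ℤ`. For finitely generated graded projective
`A`-modules `P`, the submodule `F^λ P` generated by homogeneous elements of degree `≤ λ`
is a graded submodule, and `P ↦ F^λ P` preserves (split) short exact sequences of
finitely generated graded projective `A`-modules. -/
theorem filtration_graded_and_exact (A : Type u) [Ring A] (𝒜 : ℤ → AddSubgroup A)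
    [GradedRing 𝒜] (hsupp : ∀ n : ℤ, n < 0 → 𝒜 n = ⊥) (lam : ℤ) :
    (∀ (P : Type u) [AddCommGroup P] [Module A P] (ℳ : ℤ → AddSubgroup P)
      [DirectSum.Decomposition ℳ] [SetLike.GradedSMul 𝒜 ℳ]
      [Module.Finite A P] [Module.Projective A P],
      ∀ x ∈ filtration (A := A) P ℳ lam, ∀ n : ℤ,
        (DirectSum.decompose ℳ x n : P) ∈ filtration (A := A) P ℳ lam) ∧
    (∀ (P' P P'' : Type u)
      [AddCommGroup P'] [Module A P'] [AddCommGroup P] [Module A P]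
      [AddCommGroup P''] [Module A P'']
      (ℳ' : ℤ → AddSubgroup P') (ℳ : ℤ → AddSubgroup P) (ℳ'' : ℤ → AddSubgroup P'')
      [DirectSum.Decomposition ℳ'] [SetLike.GradedSMul 𝒜 ℳ']
      [DirectSum.Decomposition ℳ] [SetLike.GradedSMul 𝒜 ℳ]
      [DirectSum.Decomposition ℳ''] [SetLike.GradedSMul 𝒜 ℳ'']
      [Module.Finite A P'] [Module.Projective A P']
      [Module.Finite A P] [Module.Projective A P]
      [Module.Finite A P''] [Module.Projective A P'']
      (f : P' →ₗ[A] P) (g : P →ₗ[A] P''),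
      (∀ (n : ℤ) (x : P'), x ∈ ℳ' n → f x ∈ ℳ n) →
      (∀ (n : ℤ) (x : P), x ∈ ℳ n → g x ∈ ℳ'' n) →
      Function.Injective f → Function.Surjective g → LinearMap.range f = LinearMap.ker g →
        (filtration P' ℳ' lam).map f = filtration P ℳ lam ⊓ LinearMap.ker g ∧
        (filtration P ℳ lam).map g = filtration P'' ℳ'' lam) :=
  filtration_graded_and_exact_general A 𝒜 lam
end
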